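/- If φ is a state on a C*-tensor product A₁ ⊗_β A₂ (a C*-completion of the algebraic tensor product of unital C*-algebras A₁ and A₂) such that the restriction φ₁ of φ to A₁ (given by φ₁(a) = φ(a ⊗ 1)) is a pure state of A₁, then φ factors as φ = φ₁ ⊗ φ₂ for some state φ₂ on A₂, i.e., φ(a ⊗ b) = φ₁(a)·φ₂(b) for all a ∈ A₁, b ∈ A₂. -/

import Mathlib

/-! The functional `a ↦ φ (a ⊗ b)` is positive for `b ≥ 0`, and for `b ≤ 1` it is dominated by
`φ₁`, the difference being `a ↦ φ (a ⊗ (1 - b))`. A positive functional dominated by a pure state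
is a multiple of it, so `φ (a ⊗ b) = φ (1 ⊗ b) φ₁ a` for positive contractions `b`, which span `A₂`.
The embeddings are unital (`ι₁ 1 * ι₂ 1` acts as the identity on the dense span), so
`φ₂ := φ (1 ⊗ ·)` is a state. -/

set_option maxHeartbeats 1000000
set_option synthInstance.maxHeartbeats 1000000

open scoped ComplexOrder TensorProduct

noncomputable section

/-- A state on a (possibly non-unital) normed star algebra: a norm-one positive
continuous linear functional. -/
def IsState {A : Type*} [NonUnitalNormedRing A] [StarRing A] [NormedSpace ℂ A]
    (φ : A →L[ℂ] ℂ) : Prop :=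
  ‖φ‖ = 1 ∧ ∀ a : A, 0 ≤ φ (star a * a)

/-- A pure state: a state which is an extreme point of the state space. -/
def IsPureState {A : Type*} [NonUnitalNormedRing A] [StarRing A] [NormedSpace ℂ A]
    (φ : A →L[ℂ] ℂ) : Prop :=
  IsState φ ∧ ∀ (ψ₁ ψ₂ : A →L[ℂ] ℂ) (t : ℝ), IsState ψ₁ → IsState ψ₂ → 0 < t → t < 1 →
    φ = (t : ℂ) • ψ₁ + ((1 : ℂ) - (t : ℂ)) • ψ₂ → ψ₁ = φ ∧ ψ₂ = φ

/-- A maximal abelian self-adjoint subalgebra (masa) of a (possibly non-unital)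
C*-algebra: an abelian *-subalgebra equal to its own relative commutant. -/
def IsMasa {A : Type*} [NonUnitalCStarAlgebra A] (C : NonUnitalStarSubalgebra ℂ A) : Prop :=
  (∀ x ∈ C, ∀ y ∈ C, x * y = y * x) ∧ ∀ x : A, (∀ c ∈ C, c * x = x * c) → x ∈ C

/-- A masa of a unital C*-algebra (unital version). -/
def IsMasaU {A : Type*} [CStarAlgebra A] (C : StarSubalgebra ℂ A) : Prop :=
  (∀ x ∈ C, ∀ y ∈ C, x * y = y * x) ∧ ∀ x : A, (∀ c ∈ C, c * x = x * c) → x ∈ C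

/-- The Kadison-Singer extension property for a subalgebra of a possibly non-unital
C*-algebra: (i) every pure state (character) of `C` has a unique pure state extension
to `A`, and (ii) no pure state of `A` annihilates `C`. -/
def HasExtensionProperty {A : Type*} [NonUnitalCStarAlgebra A]
    (C : NonUnitalStarSubalgebra ℂ A) : Prop :=
  (∀ χ : ↥C →L[ℂ] ℂ, IsPureState χ →
      ∃! φ : A →L[ℂ] ℂ, IsPureState φ ∧ ∀ c : ↥C, φ ↑c = χ c) ∧
  ∀ φ : A →L[ℂ] ℂ, IsPureState φ → ∃ c ∈ C, φ c ≠ 0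

/-- The extension property for a unital subalgebra of a unital C*-algebra: every pure
state (character) of `C` has a unique pure state extension to `A`. -/
def HasExtensionPropertyU {A : Type*} [CStarAlgebra A] (C : StarSubalgebra ℂ A) : Prop :=
  ∀ χ : ↥C →L[ℂ] ℂ, IsPureState χ →
    ∃! φ : A →L[ℂ] ℂ, IsPureState φ ∧ ∀ c : ↥C, φ ↑c = χ c

/-- A C*-completion `T` of the algebraic tensor product `A₁ ⊙ A₂` with respect to a
C*-norm `β`: a C*-algebra together with commuting isometric embeddings of the factors
such that the induced map on the algebraic tensor product is injective (i.e. the norm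
of `T` restricts to a genuine C*-norm on `A₁ ⊙ A₂`) and has dense range. -/
structure CStarCompletion (A₁ A₂ T : Type*) [NonUnitalCStarAlgebra A₁]
    [NonUnitalCStarAlgebra A₂] [NonUnitalCStarAlgebra T] where
  ι₁ : A₁ →⋆ₙₐ[ℂ] T
  ι₂ : A₂ →⋆ₙₐ[ℂ] T
  isometry₁ : Isometry ι₁
  isometry₂ : Isometry ι₂
  commutes : ∀ (a : A₁) (b : A₂), ι₁ a * ι₂ b = ι₂ b * ι₁ a
  injective : ∀ (n : ℕ) (a : Fin n → A₁) (b : Fin n → A₂),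
      (∑ i, ι₁ (a i) * ι₂ (b i)) = 0 → (∑ i, a i ⊗ₜ[ℂ] b i : A₁ ⊗[ℂ] A₂) = 0
  dense_span : Dense (Submodule.span ℂ {x : T | ∃ a b, x = ι₁ a * ι₂ b} : Set T)

/-- The closure, in a C*-completion `T` of `A₁ ⊙ A₂`, of the linear span of the
elementary tensors `c₁ ⊗ c₂` with `cᵢ` in given subsets of the factors: this is the
canonical copy of `C₁ ⊗ C₂` inside `A₁ ⊗_β A₂`. -/
def tensorSet {A₁ A₂ T : Type*} [NonUnitalCStarAlgebra A₁] [NonUnitalCStarAlgebra A₂]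
    [NonUnitalCStarAlgebra T] (K : CStarCompletion A₁ A₂ T)
    (S₁ : Set A₁) (S₂ : Set A₂) : Set T :=
  closure (Submodule.span ℂ {x : T | ∃ a ∈ S₁, ∃ b ∈ S₂, x = K.ι₁ a * K.ι₂ b} : Set T)

/-- The canonical copy of `C₁ ⊗ C₂` inside `A₁ ⊗_β A₂`, as a closed non-unital
star subalgebra. -/
def tensorSubalg {A₁ A₂ T : Type*} [NonUnitalCStarAlgebra A₁] [NonUnitalCStarAlgebra A₂]
    [NonUnitalCStarAlgebra T] (K : CStarCompletion A₁ A₂ T)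
    (C₁ : NonUnitalStarSubalgebra ℂ A₁) (C₂ : NonUnitalStarSubalgebra ℂ A₂) :
    NonUnitalStarSubalgebra ℂ T :=
  (NonUnitalStarAlgebra.adjoin ℂ
    {x : T | ∃ a ∈ C₁, ∃ b ∈ C₂, x = K.ι₁ a * K.ι₂ b}).topologicalClosure

/-- A (two-sided) bounded approximate identity indexed by a directed set. -/
def IsApproxIdentity {A : Type*} [NonUnitalCStarAlgebra A] {ι : Type}
    [Preorder ι] (e : ι → A) : Prop :=
  (∀ i, ‖e i‖ ≤ 1) ∧ ∀ a : A,
    Filter.Tendsto (fun i => e i * a) Filter.atTop (nhds a) ∧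
    Filter.Tendsto (fun i => a * e i) Filter.atTop (nhds a)

/-- `S` contains a bounded approximate identity for `A`. -/
def ContainsApproxIdentity {A : Type*} [NonUnitalCStarAlgebra A] (S : Set A) : Prop :=
  ∃ (ι : Type) (_ : SemilatticeSup ι) (_ : Nonempty ι) (e : ι → A),
    (∀ i, e i ∈ S) ∧ IsApproxIdentity e


open scoped CStarAlgebra

section PositiveFunctional

variable {A : Type*} [CStarAlgebra A] {f : A →L[ℂ] ℂ}

lemma apply_nonneg_of_nonneg [PartialOrder A] [StarOrderedRing A]
    (hf : ∀ a, 0 ≤ f (star a * a)) {x : A} (hx : 0 ≤ x) : 0 ≤ f x := by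
  obtain ⟨s, rfl⟩ := CStarAlgebra.nonneg_iff_eq_star_mul_self.mp hx
  exact hf s

-- Cauchy–Schwarz for the GNS semi-inner product `⟨x, y⟩ = f (star x * y)`.
lemma norm_apply_sq_le (hf : ∀ a, 0 ≤ f (star a * a)) (a : A) :
    ‖f a‖ ^ 2 ≤ ‖f 1‖ * ‖f (star a * a)‖ := by
  let _ := CStarAlgebra.spectralOrder A
  have _ := CStarAlgebra.spectralOrderedRing A
  let g : A →ₚ[ℂ] ℂ := .mk₀ f fun _ hx => apply_nonneg_of_nonneg hf hx
  have h : ‖f (star 1 * a)‖ ^ 2 ≤ √(f (star 1 * 1)).re ^ 2 * √(f (star a * a)).re ^ 2 := by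
    rw [← mul_pow]
    exact pow_le_pow_left₀ (norm_nonneg _)
      (norm_inner_le_norm (𝕜 := ℂ) (g.toPreGNS 1) (g.toPreGNS a)) 2
  rwa [Real.sq_sqrt (Complex.nonneg_iff.mp (hf _)).1, Real.sq_sqrt (Complex.nonneg_iff.mp (hf _)).1,
    Complex.re_eq_norm.mpr (hf _), Complex.re_eq_norm.mpr (hf _), star_one, one_mul,
    one_mul] at h

lemma apply_star_mul_self_le (hf : ∀ a, 0 ≤ f (star a * a)) (a : A) :
    f (star a * a) ≤ ‖a‖ ^ 2 * f 1 := by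
  let _ := CStarAlgebra.spectralOrder A
  have _ := CStarAlgebra.spectralOrderedRing A
  have h := apply_nonneg_of_nonneg hf
    (sub_nonneg.mpr (CStarAlgebra.star_mul_le_algebraMap_norm_sq (a := a)))
  rwa [map_sub, sub_nonneg, Algebra.algebraMap_eq_smul_one, ← Complex.coe_smul, map_smul,
    smul_eq_mul, Complex.ofReal_pow] at h

lemma norm_apply_le_norm_apply_one_mul (hf : ∀ a, 0 ≤ f (star a * a)) (a : A) :
    ‖f a‖ ≤ ‖f 1‖ * ‖a‖ := by
  have h : ‖f (star a * a)‖ ≤ ‖a‖ ^ 2 * ‖f 1‖ := by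
    simpa using CStarAlgebra.norm_le_norm_of_nonneg_of_le (hf a) (apply_star_mul_self_le hf a)
  refine le_of_pow_le_pow_left₀ two_ne_zero (by positivity) ?_
  calc ‖f a‖ ^ 2 ≤ ‖f 1‖ * ‖f (star a * a)‖ := norm_apply_sq_le hf a
    _ ≤ ‖f 1‖ * (‖a‖ ^ 2 * ‖f 1‖) := by gcongr
    _ = (‖f 1‖ * ‖a‖) ^ 2 := by ring

lemma norm_eq_apply_one (hf : ∀ a, 0 ≤ f (star a * a)) : (‖f‖ : ℂ) = f 1 := by
  have h1 : 0 ≤ f 1 := by simpa using hf 1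
  rw [← Complex.norm_of_nonneg' h1, Complex.ofReal_inj]
  refine le_antisymm (f.opNorm_le_bound (norm_nonneg _) (norm_apply_le_norm_apply_one_mul hf)) ?_
  rcases subsingleton_or_nontrivial A with hA | hA
  · simp [Subsingleton.elim (1 : A) 0]
  · simpa using f.le_opNorm 1

lemma IsState.apply_one (hf : IsState f) : f 1 = 1 := by
  rw [← norm_eq_apply_one hf.2, hf.1, Complex.ofReal_one]

lemma isState_of_apply_one (hf : ∀ a, 0 ≤ f (star a * a)) (h1 : f 1 = 1) : IsState f :=
  ⟨by exact_mod_cast (norm_eq_apply_one hf).trans h1, hf⟩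

lemma eq_zero_of_apply_one_eq_zero (hf : ∀ a, 0 ≤ f (star a * a)) (h1 : f 1 = 0) : f = 0 :=
  norm_eq_zero.mp (by exact_mod_cast (norm_eq_apply_one hf).trans h1)

lemma isState_inv_smul (hf : ∀ a, 0 ≤ f (star a * a)) {t : ℝ} (ht : 0 < t) (h1 : f 1 = t) :
    IsState ((t : ℂ)⁻¹ • f) := by
  have ht' : (t : ℂ) ≠ 0 := by exact_mod_cast ht.ne'
  refine isState_of_apply_one (fun a => ?_) (by simp [h1, ht'])
  simpa using mul_nonneg (by exact_mod_cast (inv_pos.mpr ht).le) (hf a)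

lemma IsPureState.eq_apply_one_smul_of_le {φ ψ : A →L[ℂ] ℂ} (hφ : IsPureState φ)
    (hψ : ∀ a, 0 ≤ ψ (star a * a)) (hle : ∀ a, 0 ≤ (φ - ψ) (star a * a)) :
    ψ = ψ 1 • φ := by
  have hφ1 := hφ.1.apply_one
  obtain ⟨t, ht0, hψ1⟩ : ∃ t : ℝ, 0 ≤ t ∧ ψ 1 = t :=
    ⟨‖ψ 1‖, norm_nonneg _, (Complex.norm_of_nonneg' (by simpa using hψ 1)).symm⟩
  have hle1 : (φ - ψ) 1 = ((1 - t : ℝ) : ℂ) := by simp [hφ1, hψ1]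
  have ht1 : t ≤ 1 := by simpa [hle1] using Complex.nonneg_iff.mp (hle 1)
  rcases ht0.eq_or_lt with ht0 | ht0
  · have hψ0 : ψ = 0 := eq_zero_of_apply_one_eq_zero hψ (by rw [hψ1, ← ht0, Complex.ofReal_zero])
    rw [hψ0]
    exact (zero_smul ℂ φ).symm
  rcases ht1.eq_or_lt with ht1 | ht1
  · have hψφ : φ = ψ := sub_eq_zero.mp (eq_zero_of_apply_one_eq_zero hle (by simp [hle1, ht1]))
    rw [← hψφ, hφ1, one_smul]
  have ht' : (t : ℂ) ≠ 0 := by exact_mod_cast ht0.ne'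
  have hdecomp : φ = (t : ℂ) • ((t : ℂ)⁻¹ • ψ)
      + ((1 : ℂ) - t) • (((1 - t : ℝ) : ℂ)⁻¹ • (φ - ψ)) := by
    have ht1' : (1 : ℂ) - t ≠ 0 := by exact_mod_cast (sub_pos.mpr ht1).ne'
    push_cast
    rw [smul_smul, smul_smul, mul_inv_cancel₀ ht', mul_inv_cancel₀ ht1', one_smul, one_smul,
      add_sub_cancel]
  have hψφ := (hφ.2 _ _ t (isState_inv_smul hψ ht0 hψ1)
    (isState_inv_smul hle (sub_pos.mpr ht1) hle1) ht0 ht1 hdecomp).1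
  rw [← hψφ, hψ1, smul_smul, mul_inv_cancel₀ ht', one_smul]

end PositiveFunctional

namespace CStarCompletion

variable {A₁ A₂ T : Type*} [CStarAlgebra A₁] [CStarAlgebra A₂] [CStarAlgebra T]
  (K : CStarCompletion A₁ A₂ T)

def ι₁L : A₁ →L[ℂ] T := ⟨K.ι₁, K.isometry₁.continuous⟩

def ι₂L : A₂ →L[ℂ] T := ⟨K.ι₂, K.isometry₂.continuous⟩

@[simp]
lemma ι₂L_apply (b : A₂) : K.ι₂L b = K.ι₂ b := rfl

def bilin (φ : T →L[ℂ] ℂ) : A₁ →L[ℂ] A₂ →L[ℂ] ℂ :=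
  ContinuousLinearMap.compL ℂ A₂ T ℂ φ ∘L (ContinuousLinearMap.mul ℂ T).bilinearComp K.ι₁L K.ι₂L

@[simp]
lemma bilin_apply (φ : T →L[ℂ] ℂ) (a : A₁) (b : A₂) : K.bilin φ a b = φ (K.ι₁ a * K.ι₂ b) := rfl

lemma ι₁_one_mul_ι₂_one : K.ι₁ 1 * K.ι₂ 1 = 1 := by
  have h : ContinuousLinearMap.mul ℂ T (K.ι₁ 1 * K.ι₂ 1) = ContinuousLinearMap.id ℂ T := by
    refine ContinuousLinearMap.ext_on K.dense_span ?_
    rintro _ ⟨a, b, rfl⟩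
    calc K.ι₁ 1 * K.ι₂ 1 * (K.ι₁ a * K.ι₂ b) = K.ι₁ 1 * (K.ι₂ 1 * K.ι₁ a) * K.ι₂ b := by
          simp only [mul_assoc]
      _ = K.ι₁ a * K.ι₂ b := by
          rw [← K.commutes, ← mul_assoc (K.ι₁ 1), mul_assoc _ (K.ι₂ 1), ← map_mul, ← map_mul,
            one_mul, one_mul]
  simpa using congr($h 1)

lemma ι₁_one : K.ι₁ 1 = 1 :=
  calc K.ι₁ 1 = K.ι₁ 1 * (K.ι₁ 1 * K.ι₂ 1) := by rw [K.ι₁_one_mul_ι₂_one, mul_one]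
    _ = 1 := by rw [← mul_assoc, ← map_mul, one_mul, K.ι₁_one_mul_ι₂_one]

lemma ι₂_one : K.ι₂ 1 = 1 :=
  calc K.ι₂ 1 = (K.ι₁ 1 * K.ι₂ 1) * K.ι₂ 1 := by rw [K.ι₁_one_mul_ι₂_one, one_mul]
    _ = 1 := by rw [mul_assoc, ← map_mul, one_mul, K.ι₁_one_mul_ι₂_one]

lemma isState_comp_ι₂L {φ : T →L[ℂ] ℂ} (hφ : IsState φ) : IsState (φ ∘L K.ι₂L) := by
  refine isState_of_apply_one (fun b => ?_) (by simpa [K.ι₂_one] using hφ.apply_one)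
  simpa only [ContinuousLinearMap.comp_apply, ι₂L_apply, map_mul, map_star] using hφ.2 (K.ι₂ b)

lemma star_mul_self_ι₂_mul_ι₁ (a : A₁) (b : A₂) :
    star (K.ι₂ b * K.ι₁ a) * (K.ι₂ b * K.ι₁ a) = K.ι₁ (star a * a) * K.ι₂ (star b * b) := by
  rw [star_mul, ← map_star, ← map_star, mul_assoc, ← mul_assoc (K.ι₂ (star b)), ← map_mul,
    ← K.commutes, ← mul_assoc, ← map_mul]

lemma bilin_flip_nonneg [PartialOrder A₂] [StarOrderedRing A₂] {φ : T →L[ℂ] ℂ}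
    (hφ : ∀ x, 0 ≤ φ (star x * x)) {b : A₂} (hb : 0 ≤ b) (a : A₁) :
    0 ≤ (K.bilin φ).flip b (star a * a) := by
  obtain ⟨c, rfl⟩ := CStarAlgebra.nonneg_iff_eq_star_mul_self.mp hb
  rw [ContinuousLinearMap.flip_apply, bilin_apply, ← star_mul_self_ι₂_mul_ι₁]
  exact hφ _

lemma bilin_flip_eq_smul_of_isPureState [PartialOrder A₂] [StarOrderedRing A₂]
    {φ : T →L[ℂ] ℂ} (hφ : ∀ x, 0 ≤ φ (star x * x)) (hpure : IsPureState ((K.bilin φ).flip 1))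
    {b : A₂} (hb : 0 ≤ b) (hb1 : ‖b‖ ≤ 1) :
    (K.bilin φ).flip b = φ (K.ι₂ b) • (K.bilin φ).flip 1 := by
  have h1b : 0 ≤ 1 - b := sub_nonneg.mpr ((CStarAlgebra.norm_le_one_iff_of_nonneg b hb).mp hb1)
  have h := hpure.eq_apply_one_smul_of_le (K.bilin_flip_nonneg hφ hb)
    (by simpa [← map_sub] using K.bilin_flip_nonneg hφ h1b)
  simpa [K.ι₁_one] using h

lemma bilin_flip_eq_smulRight_of_isPureState {φ : T →L[ℂ] ℂ} (hφ : ∀ x, 0 ≤ φ (star x * x))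
    (hpure : IsPureState ((K.bilin φ).flip 1)) :
    (K.bilin φ).flip = (φ ∘L K.ι₂L).smulRight ((K.bilin φ).flip 1) := by
  let _ := CStarAlgebra.spectralOrder A₂
  have _ := CStarAlgebra.spectralOrderedRing A₂
  refine ContinuousLinearMap.coe_injective
    (LinearMap.ext_on CStarAlgebra.span_nonneg_inter_unitClosedBall ?_)
  rintro b ⟨hb, hb1⟩
  simpa using K.bilin_flip_eq_smul_of_isPureState hφ hpure hb (mem_closedBall_zero_iff.mp hb1)

end CStarCompletion

theorem stmt_0 {A₁ A₂ T : Type*} [CStarAlgebra A₁] [CStarAlgebra A₂] [CStarAlgebra T]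
    (K : CStarCompletion A₁ A₂ T)
    (φ : T →L[ℂ] ℂ) (hφ : IsState φ)
    (φ₁ : A₁ →L[ℂ] ℂ) (hφ₁ : ∀ a : A₁, φ₁ a = φ (K.ι₁ a))
    (hpure : IsPureState φ₁) :
    ∃ φ₂ : A₂ →L[ℂ] ℂ, IsState φ₂ ∧
      ∀ (a : A₁) (b : A₂), φ (K.ι₁ a * K.ι₂ b) = φ₁ a * φ₂ b := by
  have hφ₁_eq : φ₁ = (K.bilin φ).flip 1 := by
    ext a
    simp [hφ₁, K.ι₂_one]
  rw [hφ₁_eq] at hpure ⊢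
  refine ⟨φ ∘L K.ι₂L, K.isState_comp_ι₂L hφ, fun a b => ?_⟩
  simpa [mul_comm] using congr($(K.bilin_flip_eq_smulRight_of_isPureState hφ.2 hpure) b a)
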